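/- The connection formula J_n^μ(x) = (n!/[n]_μ!) Σ_{k≥0} (μ)_k / (k! (⌊(n+1)/2⌋ + μ + 1/2)_k) (x/2)^k J_{n+k}(x) holds, relating the deformed Bessel functions to the classical ones. -/

import Mathlib

/-- The deformed integer `[n]_μ = n + μ (1 - (-1)^n)`. -/
noncomputable def dIdx (μ : ℝ) (n : ℕ) : ℝ := n + μ * (1 - (-1 : ℝ) ^ n)

/-- The deformed factorial `[n]_μ!`. -/
noncomputable def dFact (μ : ℝ) : ℕ → ℝ
  | 0 => 1
  | n + 1 => dIdx μ (n + 1) * dFact μ n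

/-- The Pochhammer symbol `(a)_k = a(a+1)⋯(a+k-1)`. -/
noncomputable def poch (a : ℝ) (k : ℕ) : ℝ := ∏ i ∈ Finset.range k, (a + i)

/-- The classical Bessel function of integer order `n ≥ 0`. -/
noncomputable def besselJ (n : ℕ) (x : ℝ) : ℝ :=
  ∑' k : ℕ, (-1 : ℝ) ^ k / ((Nat.factorial k) * (Nat.factorial (k + n))) * (x / 2) ^ (2 * k + n)

/-- The deformed Bessel function `J_n^μ`. -/
noncomputable def Jmu (μ : ℝ) (n : ℕ) (x : ℝ) : ℝ :=
  ∑' k : ℕ, (-1 : ℝ) ^ k * (Nat.factorial (2 * k + n)) /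
      ((Nat.factorial k) * (Nat.factorial (k + n)) * dFact μ (2 * k + n)) *
    (x / 2) ^ (2 * k + n)

/-!
Expanding every `J_{n+k}` in its power series gives a double series which converges absolutely,
because the coefficients `(μ)_k / (k! (B)_k)`, `B = ⌊(n+1)/2⌋ + μ + 1/2`, are at most `1/k!`.
Regrouping it along the antidiagonals `k + j = s`, the coefficient of `(x/2)^(2s+n)` is a
terminating `₂F₁(-s, μ; B; 1)`, which Chu–Vandermonde sums to `(B - μ)_s / (B)_s`. Pairing the
factors of the deformed factorial two at a time, `[2s+n]_μ! / (2s+n)!` is `[n]_μ! / n!` times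
`(B)_s / (B - μ)_s`, which turns the regrouped series into the series of `J_n^μ`.
-/

open Finset
open scoped Nat

lemma poch_zero (a : ℝ) : poch a 0 = 1 := prod_range_zero _

lemma poch_succ_right (a : ℝ) (k : ℕ) : poch a (k + 1) = poch a k * (a + k) :=
  prod_range_succ _ _

lemma poch_succ_left (a : ℝ) (k : ℕ) : poch a (k + 1) = a * poch (a + 1) k := by
  rw [poch, prod_range_succ', mul_comm, poch]
  push_cast
  simp only [add_assoc, add_comm (1 : ℝ), add_zero]

lemma poch_add (a : ℝ) (i j : ℕ) : poch a (i + j) = poch a i * poch (a + i) j := by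
  rw [poch, prod_range_add, poch, poch]
  push_cast
  simp only [add_assoc]

lemma poch_pos {a : ℝ} (ha : 0 < a) (k : ℕ) : 0 < poch a k :=
  prod_pos fun _ _ => by positivity

lemma poch_nonneg {a : ℝ} (ha : 0 ≤ a) (k : ℕ) : 0 ≤ poch a k :=
  prod_nonneg fun _ _ => by positivity

lemma poch_le_poch {a b : ℝ} (ha : 0 ≤ a) (hab : a ≤ b) (k : ℕ) : poch a k ≤ poch b k :=
  prod_le_prod (fun _ _ => by positivity) fun _ _ => by linarith

/-- Chu–Vandermonde identity `₂F₁(-m, a; b; 1) = (b - a)_m / (b)_m`, cleared of denominators. -/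
theorem poch_sub_eq_sum_antidiagonal (a : ℝ) (m : ℕ) : ∀ b : ℝ,
    poch (b - a) m = ∑ ij ∈ antidiagonal m,
      (m.choose ij.1 : ℝ) * ((-1) ^ ij.1 * poch a ij.1 * poch (b + ij.1) ij.2) := by
  induction m with
  | zero => simp [poch_zero]
  | succ m ih =>
    intro b
    have pascal : ∀ i j : ℕ,
        (-1) ^ i * poch a i * poch (b + i) (j + 1) +
          (-1) ^ (i + 1) * poch a (i + 1) * poch (b + ↑(i + 1)) j =
        (b - a) * ((-1) ^ i * poch a i * poch (b + 1 + i) j) := by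
      intro i j
      rw [poch_succ_left (b + i), poch_succ_right a i, pow_succ]
      push_cast
      rw [show b + 1 + (i : ℝ) = b + i + 1 by ring, show b + ((i : ℝ) + 1) = b + i + 1 by ring]
      ring
    rw [sum_antidiagonal_choose_succ_mul (fun i j => (-1) ^ i * poch a i * poch (b + i) j),
      poch_succ_left, sub_add_eq_add_sub, ih, mul_sum, ← sum_add_distrib]
    refine sum_congr rfl fun ij hij => ?_
    rw [Nat.choose_symm_of_eq_add (mem_antidiagonal.mp hij).symm, ← mul_add, pascal]
    ring

lemma dIdx_two_mul (μ : ℝ) (t : ℕ) : dIdx μ (2 * t) = 2 * t := by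
  rw [dIdx, pow_mul, neg_one_sq, one_pow, sub_self, mul_zero, add_zero]
  push_cast
  ring

lemma dIdx_two_mul_add_one (μ : ℝ) (t : ℕ) : dIdx μ (2 * t + 1) = 2 * t + 1 + 2 * μ := by
  rw [dIdx, pow_succ, pow_mul, neg_one_sq, one_pow]
  push_cast
  ring

lemma dIdx_pos {μ : ℝ} (hμ : 0 ≤ μ) {m : ℕ} (hm : 0 < m) : 0 < dIdx μ m := by
  obtain ⟨t, rfl | rfl⟩ := Nat.even_or_odd' m
  · have : (0 : ℝ) < t := by exact_mod_cast Nat.pos_of_mul_pos_left hm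
    rw [dIdx_two_mul]; positivity
  · rw [dIdx_two_mul_add_one]; positivity

lemma dFact_pos {μ : ℝ} (hμ : 0 ≤ μ) : ∀ m, 0 < dFact μ m
  | 0 => one_pos
  | m + 1 => mul_pos (dIdx_pos hμ m.succ_pos) (dFact_pos hμ m)

/-- The odd one of `2s+n+1`, `2s+n+2` is `2(⌊(n+1)/2⌋ + 1/2 + s)`, and its deformation adds `2μ`. -/
lemma dIdx_succ_mul_dIdx_add_two (μ : ℝ) (n s : ℕ) :
    dIdx μ (2 * s + n + 1) * dIdx μ (2 * s + n + 2) * ((((n + 1) / 2 : ℕ) : ℝ) + 1 / 2 + s) =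
      (2 * s + n + 1) * (2 * s + n + 2) * ((((n + 1) / 2 : ℕ) : ℝ) + μ + 1 / 2 + s) := by
  obtain ⟨a, rfl | rfl⟩ := Nat.even_or_odd' n
  · rw [show (2 * a + 1) / 2 = a by omega, show 2 * s + 2 * a + 1 = 2 * (s + a) + 1 by ring,
      show 2 * s + 2 * a + 2 = 2 * (s + a + 1) by ring, dIdx_two_mul_add_one, dIdx_two_mul]
    push_cast
    ring
  · rw [show (2 * a + 1 + 1) / 2 = a + 1 by omega,
      show 2 * s + (2 * a + 1) + 1 = 2 * (s + a + 1) by ring,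
      show 2 * s + (2 * a + 1) + 2 = 2 * (s + a + 1) + 1 by ring, dIdx_two_mul_add_one,
      dIdx_two_mul]
    push_cast
    ring

lemma dFact_two_mul_add_mul_poch (μ : ℝ) (n s : ℕ) :
    dFact μ (2 * s + n) * n ! * poch ((((n + 1) / 2 : ℕ) : ℝ) + 1 / 2) s =
      dFact μ n * (2 * s + n)! * poch ((((n + 1) / 2 : ℕ) : ℝ) + μ + 1 / 2) s := by
  induction s with
  | zero => simp [poch_zero]
  | succ s ih =>
    rw [show 2 * (s + 1) + n = 2 * s + n + 1 + 1 by ring, dFact, dFact, Nat.factorial_succ,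
      Nat.factorial_succ, poch_succ_right, poch_succ_right]
    push_cast
    linear_combination (dIdx μ (2 * s + n + 1) * dIdx μ (2 * s + n + 2) *
      ((((n + 1) / 2 : ℕ) : ℝ) + 1 / 2 + s)) * ih
      + dFact μ n * (2 * s + n)! * poch ((((n + 1) / 2 : ℕ) : ℝ) + μ + 1 / 2) s *
        dIdx_succ_mul_dIdx_add_two μ n s

theorem tsum_prod_eq_tsum_sum_antidiagonal {A α : Type*} [AddCommMonoid A] [HasAntidiagonal A]
    [AddCommMonoid α] [TopologicalSpace α] [ContinuousAdd α] [T3Space α]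
    {f : A × A → α} (hf : Summable f) :
    ∑' p, f p = ∑' n, ∑ p ∈ antidiagonal n, f p := by
  rw [← HasAntidiagonal.sigmaAntidiagonalEquivProd.tsum_eq f]
  refine (Summable.tsum_sigma' (fun n => (hasSum_fintype _).summable)
    (HasAntidiagonal.sigmaAntidiagonalEquivProd.summable_iff.mpr hf)).trans ?_
  exact tsum_congr fun n => (tsum_fintype _).trans (sum_coe_sort _ _)

noncomputable def besselJTerm (n : ℕ) (x : ℝ) (k : ℕ) : ℝ :=
  (-1 : ℝ) ^ k / (k ! * (k + n)!) * (x / 2) ^ (2 * k + n)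

lemma besselJ_eq_tsum (n : ℕ) (x : ℝ) : besselJ n x = ∑' k, besselJTerm n x k := rfl

lemma abs_besselJTerm_le (n : ℕ) (x : ℝ) (k : ℕ) :
    |besselJTerm n x k| ≤ |x / 2| ^ (2 * k + n) / k ! := by
  rw [besselJTerm, abs_mul, abs_div, abs_pow, abs_pow, abs_neg, abs_one, one_pow,
    abs_of_pos (by positivity), div_mul_eq_mul_div, one_mul]
  gcongr
  exact le_mul_of_one_le_right (by positivity) (by exact_mod_cast (k + n).factorial_pos)

/-- Dominated by `|x/2|^n` times the product of two copies of the series of `exp (x²/4)`. -/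
lemma summable_mul_pow_mul_besselJTerm {a : ℕ → ℝ} (ha : ∀ k, |a k| ≤ 1 / k !) (n : ℕ) (x : ℝ) :
    Summable fun p : ℕ × ℕ => a p.1 * (x / 2) ^ p.1 * besselJTerm (n + p.1) x p.2 := by
  have hexp := Real.summable_pow_div_factorial ((x / 2) ^ 2)
  refine Summable.of_norm_bounded
    (hexp.mul_of_nonneg (hexp.mul_left (|x / 2| ^ n)) (fun _ => by positivity)
      fun _ => by positivity) fun ⟨k, j⟩ => ?_
  rw [Real.norm_eq_abs, abs_mul, abs_mul, abs_pow]
  calc |a k| * |x / 2| ^ k * |besselJTerm (n + k) x j|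
      ≤ 1 / k ! * |x / 2| ^ k * (|x / 2| ^ (2 * j + (n + k)) / j !) := by
        gcongr
        exacts [ha k, abs_besselJTerm_le _ _ _]
    _ = ((x / 2) ^ 2) ^ k / k ! * (|x / 2| ^ n * (((x / 2) ^ 2) ^ j / j !)) := by
        rw [← sq_abs (x / 2)]
        ring

lemma poch_div_mul_besselJTerm_eq {B : ℝ} (hB : 0 < B) (μ : ℝ) (n : ℕ) (x : ℝ) (k j : ℕ) :
    poch μ k / (k ! * poch B k) * (x / 2) ^ k * besselJTerm (n + k) x j =
      (-1) ^ (k + j) * (x / 2) ^ (2 * (k + j) + n) / ((k + j)! * (k + j + n)! * poch B (k + j)) *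
        ((k + j).choose k * ((-1) ^ k * poch μ k * poch (B + k) j)) := by
  have hchoose : ((k + j).choose k : ℝ) * k ! * j ! = (k + j)! := by
    rw [Nat.choose_symm_add]
    exact_mod_cast Nat.add_choose_mul_factorial_mul_factorial k j
  have hsign : (-1 : ℝ) ^ (k + j) * (-1) ^ k = (-1) ^ j := by
    rw [← pow_add, add_right_comm, ← two_mul, pow_add, pow_mul]
    norm_num
  have hchoose_pos : (0 : ℝ) < (k + j).choose k := by exact_mod_cast Nat.choose_pos (by omega)
  have hBkj := poch_pos (by positivity : 0 < B + k) j
  rw [besselJTerm, poch_add, show j + (n + k) = k + j + n by ring, ← hchoose, ← hsign]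
  field_simp
  ring

lemma sum_antidiagonal_poch_div_mul_besselJTerm {B : ℝ} (hB : 0 < B) (μ : ℝ) (n : ℕ) (x : ℝ)
    (s : ℕ) :
    ∑ p ∈ antidiagonal s, poch μ p.1 / (p.1 ! * poch B p.1) * (x / 2) ^ p.1 *
        besselJTerm (n + p.1) x p.2 =
      (-1) ^ s * (x / 2) ^ (2 * s + n) / (s ! * (s + n)! * poch B s) * poch (B - μ) s := by
  rw [poch_sub_eq_sum_antidiagonal, mul_sum]
  refine sum_congr rfl fun ⟨k, j⟩ hkj => ?_
  obtain rfl : k + j = s := mem_antidiagonal.mp hkj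
  exact poch_div_mul_besselJTerm_eq hB μ n x k j

lemma abs_poch_div_factorial_mul_poch_le {μ B : ℝ} (hμ : 0 ≤ μ) (hμB : μ ≤ B) (k : ℕ) :
    |poch μ k / (k ! * poch B k)| ≤ 1 / k ! := by
  have hμk := poch_nonneg hμ k
  have hBk := poch_nonneg (hμ.trans hμB) k
  rw [abs_of_nonneg (by positivity), mul_comm, ← div_div]
  gcongr
  exact div_le_one_of_le₀ (poch_le_poch hμ hμB k) hBk

lemma factorial_div_dFact_mul_eq {μ : ℝ} (hμ : 0 ≤ μ) (n s : ℕ) (y : ℝ) :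
    n ! / dFact μ n *
        ((-1) ^ s * y / (s ! * (s + n)! * poch ((((n + 1) / 2 : ℕ) : ℝ) + μ + 1 / 2) s) *
          poch ((((n + 1) / 2 : ℕ) : ℝ) + 1 / 2) s) =
      (-1) ^ s * (2 * s + n)! / (s ! * (s + n)! * dFact μ (2 * s + n)) * y := by
  have hn := dFact_pos hμ n
  have hsn := dFact_pos hμ (2 * s + n)
  have hB := poch_pos (by positivity : (0 : ℝ) < (((n + 1) / 2 : ℕ) : ℝ) + μ + 1 / 2) s
  have key := dFact_two_mul_add_mul_poch μ n s
  generalize poch ((((n + 1) / 2 : ℕ) : ℝ) + μ + 1 / 2) s = P at hB key ⊢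
  generalize poch ((((n + 1) / 2 : ℕ) : ℝ) + 1 / 2) s = Q at key ⊢
  field_simp
  linear_combination y * key

/-- The connection formula relating `J_n^μ` to the classical Bessel functions. -/
theorem Jmu_connection (μ : ℝ) (hμ : 0 ≤ μ) (n : ℕ) (x : ℝ) :
    Jmu μ n x = ((Nat.factorial n : ℝ) / dFact μ n) *
      ∑' k : ℕ, poch μ k / ((Nat.factorial k) * poch (((n + 1) / 2 : ℕ) + μ + 1 / 2) k) *
        (x / 2) ^ k * besselJ (n + k) x := by
  set B : ℝ := (((n + 1) / 2 : ℕ) : ℝ) + μ + 1 / 2 with hB_def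
  have hB : 0 < B := by positivity
  have hμB : μ ≤ B := by rw [hB_def]; linarith [((n + 1) / 2 : ℕ).cast_nonneg (α := ℝ)]
  have hsum := summable_mul_pow_mul_besselJTerm (abs_poch_div_factorial_mul_poch_le hμ hμB) n x
  calc Jmu μ n x
      = ∑' s, n ! / dFact μ n * ∑ p ∈ antidiagonal s,
          poch μ p.1 / (p.1 ! * poch B p.1) * (x / 2) ^ p.1 * besselJTerm (n + p.1) x p.2 := by
        refine tsum_congr fun s => ?_
        rw [sum_antidiagonal_poch_div_mul_besselJTerm hB,
          show B - μ = ((n + 1) / 2 : ℕ) + 1 / 2 by ring, factorial_div_dFact_mul_eq hμ]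
    _ = n ! / dFact μ n * ∑' p : ℕ × ℕ,
          poch μ p.1 / (p.1 ! * poch B p.1) * (x / 2) ^ p.1 * besselJTerm (n + p.1) x p.2 := by
        rw [tsum_mul_left, tsum_prod_eq_tsum_sum_antidiagonal hsum]
    _ = _ := by
        rw [hsum.tsum_prod]
        simp only [besselJ_eq_tsum, ← tsum_mul_left]
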